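/- arXiv:2406.03386 — 3 statements merged into one kernel-verified Lean document; each statement's English description precedes it below -/
import Mathlib

section
/- Let G = (V,E) be a finite connected simple graph with at least one edge, and consider the simple random walk started at any vertex u ∈ V with cover time T = inf{ t : {w_0,…,w_t} = V }. Then P[T ≤ 4·|V|·|E|] > 0. Consequently, G possesses a walk of length at most 4·|V|·|E| that visits every vertex of G, and for every integer ℓ ≥ 4·|V|·|E| there exists a walk of length exactly ℓ that visits every vertex of G. -/
/-!
Concatenating paths to the vertices one after another gives a walk through all of `V`; each
path is a trail, so has length at most `|E|`, and the walk has length at most `|V|·|E|`.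
Bouncing back and forth along an edge at its end pads it to any larger length. The simple
random walk follows a fixed walk of length `t` with probability `∏ 1 / deg (w i) > 0`.
-/

open MeasureTheory Finset

namespace SimpleGraph

variable {V : Type*} {G : SimpleGraph V}

lemma Connected.exists_walk_length_le_of_subset_support [DecidableEq V] [Fintype G.edgeSet]
    (hconn : G.Connected) (u : V) (l : List V) :
    ∃ v, ∃ p : G.Walk u v, p.length ≤ l.length * #G.edgeFinset ∧ l ⊆ p.support := by
  induction l with
  | nil => exact ⟨u, .nil, by simp, List.nil_subset _⟩
  | cons a l ih =>
    obtain ⟨v, p, hlen, hsupp⟩ := ih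
    let q := (hconn v a).some.toPath
    have hq : q.val.length ≤ #G.edgeFinset := q.prop.isTrail.length_le_card_edgeFinset
    refine ⟨a, p.append q.val, ?_, List.cons_subset.mpr ⟨?_, ?_⟩⟩
    · rw [Walk.length_append, List.length_cons, Nat.succ_mul]
      omega
    · exact Walk.support_subset_support_append_right _ _ (Walk.end_mem_support _)
    · exact List.Subset.trans hsupp (Walk.support_subset_support_append_left _ _)

lemma Walk.exists_length_eq_add_of_adj {u v x : V} (p : G.Walk u v) (h : G.Adj v x) (n : ℕ) :
    ∃ y, ∃ q : G.Walk u y, q.length = p.length + n ∧ p.support ⊆ q.support := by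
  induction n generalizing v x with
  | zero => exact ⟨v, p, rfl, List.Subset.refl _⟩
  | succ n ih =>
    obtain ⟨y, q, hlen, hsupp⟩ := ih (p.concat h) h.symm
    refine ⟨y, q, ?_, List.Subset.trans (p.support_subset_support_concat h) hsupp⟩
    rw [hlen, Walk.length_concat]
    omega

lemma Connected.exists_walk_length_eq_forall_mem_support [Fintype V] [DecidableEq V]
    [Fintype G.edgeSet] [Nontrivial V] (hconn : G.Connected) (u : V) {ℓ : ℕ}
    (hℓ : Fintype.card V * #G.edgeFinset ≤ ℓ) :
    ∃ v, ∃ p : G.Walk u v, p.length = ℓ ∧ ∀ x, x ∈ p.support := by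
  obtain ⟨v, p, hlen, hsupp⟩ := hconn.exists_walk_length_le_of_subset_support u univ.toList
  rw [length_toList, card_univ] at hlen
  obtain ⟨x, hvx⟩ := hconn.preconnected.exists_adj_of_nontrivial v
  obtain ⟨y, q, hqlen, hqsupp⟩ := p.exists_length_eq_add_of_adj hvx (ℓ - p.length)
  exact ⟨y, q, by omega, fun z ↦ hqsupp (hsupp (mem_toList.mpr (mem_univ z)))⟩

lemma Connected.exists_seq_adj_forall_exists_eq [Fintype V] [DecidableEq V] [Fintype G.edgeSet]
    [Nontrivial V] (hconn : G.Connected) (u : V) {ℓ : ℕ}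
    (hℓ : Fintype.card V * #G.edgeFinset ≤ ℓ) :
    ∃ w : ℕ → V, w 0 = u ∧ (∀ i < ℓ, G.Adj (w i) (w (i + 1))) ∧ ∀ x, ∃ i ≤ ℓ, w i = x := by
  obtain ⟨v, p, rfl, hsupp⟩ := hconn.exists_walk_length_eq_forall_mem_support u hℓ
  refine ⟨p.getVert, p.getVert_zero, fun i hi ↦ p.adj_getVert_succ hi, fun x ↦ ?_⟩
  obtain ⟨i, hi, hle⟩ := Walk.mem_support_iff_exists_getVert.mp (hsupp x)
  exact ⟨i, hle, hi⟩

end SimpleGraph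

lemma measure_cylinder_pos {V : Type*} [DecidableEq V] [MeasurableSpace V]
    {μ : Measure (ℕ → V)} {u : V} {P : V → V → ENNReal}
    (hμ : ∀ (t : ℕ) (w : ℕ → V),
      μ {ω | ∀ i ≤ t, ω i = w i} =
        (if w 0 = u then 1 else 0) * ∏ i ∈ range t, P (w i) (w (i + 1)))
    {t : ℕ} {w : ℕ → V} (hw0 : w 0 = u) (hP : ∀ i < t, P (w i) (w (i + 1)) ≠ 0) :
    0 < μ {ω | ∀ i ≤ t, ω i = w i} := by
  rw [hμ, if_pos hw0, one_mul, pos_iff_ne_zero, prod_ne_zero_iff]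
  exact fun i hi ↦ hP i (mem_range.mp hi)

theorem cover_walk_exists_general
    {V : Type*} [Fintype V] [DecidableEq V]
    [MeasurableSpace V]
    (G : SimpleGraph V) [DecidableRel G.Adj]
    (hconn : G.Connected)
    (hedge : 0 < G.edgeFinset.card)
    (u : V)
    (μ : Measure (ℕ → V))
    (P : V → V → ENNReal)
    (hP : ∀ a b : V, P a b = if G.Adj a b then ((G.degree a : ENNReal))⁻¹ else 0)
    (hμ : ∀ (t : ℕ) (w : ℕ → V),
      μ {ω | ∀ i ≤ t, ω i = w i} =
        (if w 0 = u then 1 else 0) * ∏ i ∈ Finset.range t, P (w i) (w (i + 1))) :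
    (0 < μ {ω | ∃ t ≤ 4 * Fintype.card V * G.edgeFinset.card,
        ∀ v : V, ∃ i ≤ t, ω i = v}) ∧
    (∃ k ≤ 4 * Fintype.card V * G.edgeFinset.card, ∃ w : ℕ → V,
        (∀ i < k, G.Adj (w i) (w (i + 1))) ∧ ∀ v : V, ∃ i ≤ k, w i = v) ∧
    (∀ ℓ : ℕ, 4 * Fintype.card V * G.edgeFinset.card ≤ ℓ → ∃ w : ℕ → V,
        (∀ i < ℓ, G.Adj (w i) (w (i + 1))) ∧ ∀ v : V, ∃ i ≤ ℓ, w i = v) := by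
  set N := 4 * Fintype.card V * G.edgeFinset.card
  obtain ⟨a, b, hab⟩ := G.ne_bot_iff_exists_adj.mp (G.edgeFinset_nonempty.mp (card_pos.mp hedge))
  have : Nontrivial V := nontrivial_of_ne a b hab.ne
  have hN : Fintype.card V * #G.edgeFinset ≤ N := by simp only [N, mul_assoc]; omega
  have hcover : ∀ ℓ, N ≤ ℓ → ∃ w : ℕ → V, w 0 = u ∧ (∀ i < ℓ, G.Adj (w i) (w (i + 1))) ∧
      ∀ v, ∃ i ≤ ℓ, w i = v := fun ℓ hℓ ↦
    hconn.exists_seq_adj_forall_exists_eq u (hN.trans hℓ)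
  obtain ⟨w, hw0, hadj, hcov⟩ := hcover N le_rfl
  refine ⟨?_, ⟨N, le_rfl, w, hadj, hcov⟩, fun ℓ hℓ ↦ ?_⟩
  · have hstep : ∀ i < N, P (w i) (w (i + 1)) ≠ 0 := fun i hi ↦ by
      rw [hP, if_pos (hadj i hi)]
      exact ENNReal.inv_ne_zero.mpr (ENNReal.natCast_ne_top _)
    have hpos := measure_cylinder_pos hμ hw0 hstep
    refine hpos.trans_le (measure_mono fun ω hω ↦ ⟨N, le_rfl, fun v ↦ ?_⟩)
    obtain ⟨i, hi, rfl⟩ := hcov v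
    exact ⟨i, hi, hω i hi⟩
  · obtain ⟨w, -, hadj, hcov⟩ := hcover ℓ hℓ
    exact ⟨w, hadj, hcov⟩

/-- For the simple random walk on a finite connected simple graph with at least one
edge, the probability that the cover time is at most `4·|V|·|E|` is positive.
Consequently, the graph possesses a walk of length at most `4·|V|·|E|` visiting every
vertex, and for every `ℓ ≥ 4·|V|·|E|` a walk of length exactly `ℓ` visiting every
vertex. -/
theorem cover_walk_exists
    {V : Type*} [Fintype V] [DecidableEq V]
    [MeasurableSpace V] [MeasurableSingletonClass V]
    (G : SimpleGraph V) [DecidableRel G.Adj]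
    (hconn : G.Connected)
    (hedge : 0 < G.edgeFinset.card)
    (u : V)
    (μ : Measure (ℕ → V)) [IsProbabilityMeasure μ]
    (P : V → V → ENNReal)
    (hP : ∀ a b : V, P a b = if G.Adj a b then ((G.degree a : ENNReal))⁻¹ else 0)
    (hμ : ∀ (t : ℕ) (w : ℕ → V),
      μ {ω | ∀ i ≤ t, ω i = w i} =
        (if w 0 = u then 1 else 0) * ∏ i ∈ Finset.range t, P (w i) (w (i + 1))) :
    (0 < μ {ω | ∃ t ≤ 4 * Fintype.card V * G.edgeFinset.card,
        ∀ v : V, ∃ i ≤ t, ω i = v}) ∧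
    (∃ k ≤ 4 * Fintype.card V * G.edgeFinset.card, ∃ w : ℕ → V,
        (∀ i < k, G.Adj (w i) (w (i + 1))) ∧ ∀ v : V, ∃ i ≤ k, w i = v) ∧
    (∀ ℓ : ℕ, 4 * Fintype.card V * G.edgeFinset.card ≤ ℓ → ∃ w : ℕ → V,
        (∀ i < ℓ, G.Adj (w i) (w (i + 1))) ∧ ∀ v : V, ∃ i ≤ ℓ, w i = v) :=
  cover_walk_exists_general G hconn hedge u μ P hP hμ
end

section
/- Let G = (V,E) and G' = (V',E') be finite simple graphs, let W = (w_0,…,w_ℓ) be a walk in G with {w_0,…,w_ℓ} = V, and let W' = (w'_0,…,w'_ℓ) be a walk in G' with {w'_0,…,w'_ℓ} = V'. If the identity encodings of W and W' with window size ℓ are equal (id_W^ℓ = id_{W'}^ℓ) and the adjacency encodings with window size ℓ are equal (adj_W^ℓ = adj_{W'}^ℓ), then the assignment w_i ↦ w'_i (0 ≤ i ≤ ℓ) is well-defined and is a graph isomorphism from G to G'. In particular, G and G' are isomorphic. -/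
/-- If two covering walks of length `ℓ` in finite simple graphs `G` and `G'` have
equal identity encodings and equal adjacency encodings with window size `ℓ`, then
`w_i ↦ w'_i` is well-defined and extends to a graph isomorphism `G ≃g G'`. -/
theorem iso_of_equal_walk_encodings
    {V V' : Type*} [Fintype V] [Fintype V']
    (G : SimpleGraph V) (G' : SimpleGraph V') (ℓ : ℕ)
    (W : ℕ → V) (W' : ℕ → V')
    (hwalk : ∀ i < ℓ, G.Adj (W i) (W (i + 1)))
    (hwalk' : ∀ i < ℓ, G'.Adj (W' i) (W' (i + 1)))
    (hcov : ∀ v : V, ∃ i ≤ ℓ, W i = v)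
    (hcov' : ∀ v : V', ∃ i ≤ ℓ, W' i = v)
    (hid : ∀ i ≤ ℓ, ∀ j < ℓ,
      ((j + 1 ≤ i ∧ W i = W (i - j - 1)) ↔ (j + 1 ≤ i ∧ W' i = W' (i - j - 1))))
    (hadj : ∀ i ≤ ℓ, ∀ j < ℓ,
      ((j + 1 ≤ i ∧ G.Adj (W i) (W (i - j - 1))) ↔
        (j + 1 ≤ i ∧ G'.Adj (W' i) (W' (i - j - 1))))) :
    ∃ φ : G ≃g G', ∀ i ≤ ℓ, φ (W i) = W' i := by
  have key_id : ∀ a b, a ≤ ℓ → b ≤ ℓ → (W a = W b ↔ W' a = W' b) := by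
    have main : ∀ a b, a < b → b ≤ ℓ → (W b = W a ↔ W' b = W' a) := by
      intro a b hab hb
      have h := hid b hb (b - a - 1) (by omega)
      have e : b - (b - a - 1) - 1 = a := by omega
      rw [e] at h
      exact ⟨fun hw => (h.mp ⟨by omega, hw⟩).2, fun hw => (h.mpr ⟨by omega, hw⟩).2⟩
    intro a b ha hb
    rcases lt_trichotomy a b with h | h | h
    · exact ⟨fun h' => ((main a b h hb).mp h'.symm).symm,
        fun h' => ((main a b h hb).mpr h'.symm).symm⟩
    · subst h; simp
    · exact main b a h ha
  have key_adj : ∀ a b, a ≤ ℓ → b ≤ ℓ → (G.Adj (W a) (W b) ↔ G'.Adj (W' a) (W' b)) := by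
    have main : ∀ a b, a < b → b ≤ ℓ → (G.Adj (W b) (W a) ↔ G'.Adj (W' b) (W' a)) := by
      intro a b hab hb
      have h := hadj b hb (b - a - 1) (by omega)
      have e : b - (b - a - 1) - 1 = a := by omega
      rw [e] at h
      exact ⟨fun hw => (h.mp ⟨by omega, hw⟩).2, fun hw => (h.mpr ⟨by omega, hw⟩).2⟩
    intro a b ha hb
    rcases lt_trichotomy a b with h | h | h
    · exact ⟨fun h' => ((main a b h hb).mp h'.symm).symm,
        fun h' => ((main a b h hb).mpr h'.symm).symm⟩
    · subst h; simp
    · exact main b a h ha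
  choose idx hidx hWidx using hcov
  choose idx' hidx' hWidx' using hcov'
  set f : V → V' := fun v => W' (idx v) with hf
  set g : V' → V := fun v' => W (idx' v') with hg
  have hgf : ∀ v, g (f v) = v := by
    intro v
    have h1 : W' (idx' (f v)) = W' (idx v) := hWidx' (f v)
    have h2 := (key_id (idx' (f v)) (idx v) (hidx' _) (hidx v)).mpr h1
    show W (idx' (f v)) = v
    rw [h2, hWidx]
  have hfg : ∀ v', f (g v') = v' := by
    intro v'
    have h1 : W (idx (g v')) = W (idx' v') := hWidx (g v')
    have h2 := (key_id (idx (g v')) (idx' v') (hidx _) (hidx' v')).mp h1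
    show W' (idx (g v')) = v'
    rw [h2, hWidx']
  refine ⟨⟨⟨f, g, hgf, hfg⟩, ?_⟩, ?_⟩
  · intro a b
    show G'.Adj (W' (idx a)) (W' (idx b)) ↔ G.Adj a b
    rw [← key_adj _ _ (hidx a) (hidx b), hWidx, hWidx]
  · intro i hi
    show W' (idx (W i)) = W' i
    exact (key_id (idx (W i)) i (hidx _) hi).mp (hWidx (W i))
end

section
/- Let n ≥ 1 and let G = (V,E) and G' = (V',E') be finite connected simple graphs, each with at least one edge and with |V| ≤ n and |V'| ≤ n, and let ℓ ≥ 4n³. Let μ be the law of the pair of encodings (id_W^ℓ, adj_W^ℓ) of a uniform-start simple random walk W of length ℓ on G, and let μ' be the corresponding law for G'. If μ = μ', then G and G' are isomorphic. -/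
/-- The identity encoding of a walk `w` of length `ℓ` with window size `ℓ`:
`idEnc w i j = true` iff `i - j ≥ 1` and `w i = w (i - j - 1)`. -/
def idEnc {V : Type*} [DecidableEq V] {ℓ : ℕ} (w : Fin (ℓ + 1) → V) :
    Fin (ℓ + 1) → Fin ℓ → Bool := fun i j =>
  decide ((j : ℕ) + 1 ≤ (i : ℕ) ∧
    w i = w ⟨(i : ℕ) - (j : ℕ) - 1,
      lt_of_le_of_lt (le_trans (Nat.sub_le _ _) (Nat.sub_le _ _)) i.isLt⟩)

/-- The adjacency encoding of a walk `w` of length `ℓ` with window size `ℓ`: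
`adjEnc G w i j = true` iff `i - j ≥ 1` and `w i` is adjacent to `w (i - j - 1)`. -/
def adjEnc {V : Type*} (G : SimpleGraph V) [DecidableRel G.Adj] {ℓ : ℕ}
    (w : Fin (ℓ + 1) → V) : Fin (ℓ + 1) → Fin ℓ → Bool := fun i j =>
  decide ((j : ℕ) + 1 ≤ (i : ℕ) ∧
    G.Adj (w i) (w ⟨(i : ℕ) - (j : ℕ) - 1,
      lt_of_le_of_lt (le_trans (Nat.sub_le _ _) (Nat.sub_le _ _)) i.isLt⟩))

/-- The probability that the uniform-start simple random walk of length `ℓ` on `G`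
equals the vertex sequence `w`. -/
noncomputable def walkProb {V : Type*} [Fintype V] (G : SimpleGraph V) [DecidableRel G.Adj]
    {ℓ : ℕ} (w : Fin (ℓ + 1) → V) : ℝ :=
  (Fintype.card V : ℝ)⁻¹ *
    ∏ i : Fin ℓ,
      (if G.Adj (w i.castSucc) (w i.succ)
        then ((G.degree (w i.castSucc) : ℝ))⁻¹ else 0)

/-- The law of the pair of encodings `(id_W^ℓ, adj_W^ℓ)` of the uniform-start simple
random walk `W` of length `ℓ` on `G`, as a function assigning to each possible pair of
encodings its probability. -/
noncomputable def encLaw {V : Type*} [Fintype V] [DecidableEq V] (G : SimpleGraph V)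
    [DecidableRel G.Adj] (ℓ : ℕ) :
    ((Fin (ℓ + 1) → Fin ℓ → Bool) × (Fin (ℓ + 1) → Fin ℓ → Bool)) → ℝ := fun e =>
  ∑ w : Fin (ℓ + 1) → V, if (idEnc w, adjEnc G w) = e then walkProb G w else 0

/-!
A walk of length `ℓ ≥ |V|²` can visit every vertex of a connected graph `G` with an edge, and it
has positive probability. If the laws agree, some walk on `G'` carries the same encodings. The
encodings record, for every pair of times, whether the walk is at the same vertex and whether it
is at adjacent vertices, so sending each vertex of the covering walk to the vertex of its twin at
the same time is an embedding `G ↪g G'`. Embeddings in both directions between finite graphs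
give an isomorphism.
-/

namespace SimpleGraph

variable {V : Type*} {G : SimpleGraph V}

lemma exists_walk_length_eq (hG : ∀ v, ∃ u, G.Adj v u) (b : V) :
    ∀ k, ∃ (c : V) (r : G.Walk b c), r.length = k
  | 0 => ⟨b, .nil, rfl⟩
  | k + 1 => by
    obtain ⟨c, r, hr⟩ := exists_walk_length_eq hG b k
    obtain ⟨u, hu⟩ := hG c
    exact ⟨u, r.concat hu, by simp [hr]⟩

variable [Fintype V]

lemma Connected.exists_walk_forall_mem_support_length_le [DecidableEq V] (hG : G.Connected)
    (a : V) (s : Finset V) :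
    ∃ (b : V) (p : G.Walk a b), (∀ v ∈ s, v ∈ p.support) ∧
      p.length ≤ s.card * Fintype.card V := by
  induction s using Finset.induction_on with
  | empty => exact ⟨a, .nil, by simp, by simp⟩
  | @insert x s hx ih =>
    obtain ⟨b, p, hp, hlen⟩ := ih
    obtain ⟨q, hq, -⟩ := (hG b x).exists_path_of_dist
    refine ⟨x, p.append q, ?_, ?_⟩
    · intro v hv
      rw [p.mem_support_append_iff]
      rcases Finset.mem_insert.mp hv with rfl | hv
      · exact Or.inr q.end_mem_support
      · exact Or.inl (hp v hv)
    · rw [Walk.length_append, Finset.card_insert_of_notMem hx, add_one_mul]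
      have := hq.length_lt
      omega

lemma Connected.exists_walk_forall_mem_support_length_eq [Nontrivial V] (hG : G.Connected)
    {ℓ : ℕ} (hℓ : Fintype.card V * Fintype.card V ≤ ℓ) :
    ∃ (a b : V) (p : G.Walk a b), (∀ v, v ∈ p.support) ∧ p.length = ℓ := by
  classical
  obtain ⟨a⟩ := hG.nonempty
  obtain ⟨b, p, hp, hlen⟩ := hG.exists_walk_forall_mem_support_length_le a Finset.univ
  rw [Finset.card_univ] at hlen
  obtain ⟨c, r, hr⟩ :=
    exists_walk_length_eq hG.preconnected.exists_adj_of_nontrivial b (ℓ - p.length)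
  refine ⟨a, c, p.append r, fun v ↦ ?_, by rw [Walk.length_append, hr]; omega⟩
  exact (p.mem_support_append_iff r).mpr (.inl (hp v (Finset.mem_univ v)))

end SimpleGraph

section Encodings

variable {ℓ : ℕ}

lemma idEnc_apply_of_lt {V : Type*} [DecidableEq V] (w : Fin (ℓ + 1) → V) {i j : Fin (ℓ + 1)}
    (h : j < i) : idEnc w i ⟨i - j - 1, by omega⟩ = decide (w i = w j) := by
  have hj : i.val - (i.val - j.val - 1) - 1 = j.val := by omega
  simp only [idEnc, hj, Fin.eta, decide_eq_decide]
  exact and_iff_right (by omega)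

lemma adjEnc_apply_of_lt {V : Type*} (G : SimpleGraph V) [DecidableRel G.Adj]
    (w : Fin (ℓ + 1) → V) {i j : Fin (ℓ + 1)} (h : j < i) :
    adjEnc G w i ⟨i - j - 1, by omega⟩ = decide (G.Adj (w i) (w j)) := by
  have hj : i.val - (i.val - j.val - 1) - 1 = j.val := by omega
  simp only [adjEnc, hj, Fin.eta, decide_eq_decide]
  exact and_iff_right (by omega)

variable {V V' : Type*}

lemma eq_iff_eq_of_idEnc_eq [DecidableEq V] [DecidableEq V'] {w : Fin (ℓ + 1) → V}
    {w' : Fin (ℓ + 1) → V'} (h : idEnc w = idEnc w') (i j : Fin (ℓ + 1)) :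
    w i = w j ↔ w' i = w' j := by
  rcases lt_trichotomy j i with hji | rfl | hij
  · simpa [idEnc_apply_of_lt, hji] using congr_fun₂ h i ⟨i - j - 1, by omega⟩
  · simp
  · simpa [idEnc_apply_of_lt, hij, eq_comm] using congr_fun₂ h j ⟨j - i - 1, by omega⟩

lemma adj_iff_adj_of_adjEnc_eq (G : SimpleGraph V) [DecidableRel G.Adj] (G' : SimpleGraph V')
    [DecidableRel G'.Adj] {w : Fin (ℓ + 1) → V} {w' : Fin (ℓ + 1) → V'}
    (h : adjEnc G w = adjEnc G' w') (i j : Fin (ℓ + 1)) :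
    G.Adj (w i) (w j) ↔ G'.Adj (w' i) (w' j) := by
  rcases lt_trichotomy j i with hji | rfl | hij
  · simpa [adjEnc_apply_of_lt, hji] using congr_fun₂ h i ⟨i - j - 1, by omega⟩
  · simp
  · simpa [adjEnc_apply_of_lt, hij, SimpleGraph.adj_comm] using
      congr_fun₂ h j ⟨j - i - 1, by omega⟩

end Encodings

section Law

variable {V : Type*} [Fintype V] {ℓ : ℕ}

lemma walkProb_nonneg (G : SimpleGraph V) [DecidableRel G.Adj] (w : Fin (ℓ + 1) → V) :
    0 ≤ walkProb G w :=
  mul_nonneg (by positivity) (Finset.prod_nonneg fun _ _ ↦ by split_ifs <;> positivity)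

lemma walkProb_pos (G : SimpleGraph V) [DecidableRel G.Adj] {w : Fin (ℓ + 1) → V}
    (hw : ∀ i : Fin ℓ, G.Adj (w i.castSucc) (w i.succ)) : 0 < walkProb G w := by
  have : Nonempty V := ⟨w 0⟩
  refine mul_pos (by simp [Fintype.card_pos]) (Finset.prod_pos fun i _ ↦ ?_)
  rw [if_pos (hw i)]
  exact inv_pos.mpr (Nat.cast_pos.mpr (G.degree_pos_iff_exists_adj _ |>.mpr ⟨_, hw i⟩))

variable [DecidableEq V] (G : SimpleGraph V) [DecidableRel G.Adj]

lemma encLaw_pos_of_walkProb_pos {w : Fin (ℓ + 1) → V} (hw : 0 < walkProb G w) :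
    0 < encLaw G ℓ (idEnc w, adjEnc G w) :=
  Finset.sum_pos' (fun x _ ↦ by split_ifs <;> simp [walkProb_nonneg])
    ⟨w, Finset.mem_univ w, by rwa [if_pos rfl]⟩

lemma exists_encodings_eq_of_encLaw_pos {e} (he : 0 < encLaw G ℓ e) :
    ∃ w : Fin (ℓ + 1) → V, (idEnc w, adjEnc G w) = e := by
  by_contra! h
  exact he.ne' (Finset.sum_eq_zero fun w _ ↦ if_neg (h w))

end Law

namespace SimpleGraph

variable {V V' : Type*} {G : SimpleGraph V} {G' : SimpleGraph V'}

lemma nonempty_embedding_of_surjective {ι : Type*} {w : ι → V} {w' : ι → V'}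
    (hw : Function.Surjective w) (heq : ∀ i j, w i = w j ↔ w' i = w' j)
    (hadj : ∀ i j, G.Adj (w i) (w j) ↔ G'.Adj (w' i) (w' j)) : Nonempty (G ↪g G') := by
  set g := Function.surjInv hw
  have hg : ∀ v, w (g v) = v := Function.surjInv_eq hw
  refine ⟨⟨⟨w' ∘ g, fun u v huv ↦ ?_⟩, fun {u v} ↦ ?_⟩⟩
  · rwa [Function.comp_apply, Function.comp_apply, ← heq, hg, hg] at huv
  · change G'.Adj (w' (g u)) (w' (g v)) ↔ G.Adj u v
    rw [← hadj, hg, hg]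

lemma nonempty_iso_of_embeddings [Fintype V] [Fintype V'] (f : G ↪g G') (f' : G' ↪g G) :
    Nonempty (G ≃g G') := by
  have hcard : Fintype.card V = Fintype.card V' :=
    le_antisymm (Fintype.card_le_of_embedding f.toEmbedding)
      (Fintype.card_le_of_embedding f'.toEmbedding)
  exact ⟨RelIso.ofSurjective f ((Fintype.bijective_iff_injective_and_card f).mpr
    ⟨f.injective, hcard⟩).surjective⟩

end SimpleGraph

lemma nonempty_embedding_of_encLaw_eq {V V' : Type*} [Fintype V] [DecidableEq V] [Nontrivial V]
    [Fintype V'] [DecidableEq V'] {G : SimpleGraph V} [DecidableRel G.Adj]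
    {G' : SimpleGraph V'} [DecidableRel G'.Adj] (hG : G.Connected) {ℓ : ℕ}
    (hℓ : Fintype.card V * Fintype.card V ≤ ℓ) (hlaw : encLaw G ℓ = encLaw G' ℓ) :
    Nonempty (G ↪g G') := by
  obtain ⟨a, b, p, hp, rfl⟩ := hG.exists_walk_forall_mem_support_length_eq hℓ
  let w : Fin (p.length + 1) → V := fun i ↦ p.getVert i
  have hw_surj : Function.Surjective w := fun v ↦ by
    obtain ⟨i, hi, hi_le⟩ := SimpleGraph.Walk.mem_support_iff_exists_getVert.mp (hp v)
    exact ⟨⟨i, by omega⟩, hi⟩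
  have hw_adj : ∀ i : Fin p.length, G.Adj (w i.castSucc) (w i.succ) := fun i ↦
    p.adj_getVert_succ i.isLt
  have hpos : 0 < encLaw G' p.length (idEnc w, adjEnc G w) :=
    hlaw ▸ encLaw_pos_of_walkProb_pos G (walkProb_pos G hw_adj)
  obtain ⟨w', hw'⟩ := exists_encodings_eq_of_encLaw_pos G' hpos
  obtain ⟨hid, hadj⟩ := Prod.ext_iff.mp hw'
  exact SimpleGraph.nonempty_embedding_of_surjective hw_surj
    (eq_iff_eq_of_idEnc_eq hid.symm)
    (adj_iff_adj_of_adjEnc_eq G G' hadj.symm)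

theorem iso_of_encLaw_eq_general
    {V V' : Type*} [Fintype V] [DecidableEq V] [Fintype V'] [DecidableEq V']
    (G : SimpleGraph V) [DecidableRel G.Adj]
    (G' : SimpleGraph V') [DecidableRel G'.Adj]
    (n : ℕ)
    (hcard : Fintype.card V ≤ n) (hcard' : Fintype.card V' ≤ n)
    (hconn : G.Connected) (hconn' : G'.Connected)
    (hedge : G.edgeSet.Nonempty) (hedge' : G'.edgeSet.Nonempty)
    (ℓ : ℕ) (hℓ : 4 * n ^ 3 ≤ ℓ)
    (hlaw : encLaw G ℓ = encLaw G' ℓ) :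
    Nonempty (G ≃g G') := by
  obtain ⟨⟨a, b⟩, hab⟩ := hedge
  obtain ⟨⟨a', b'⟩, hab'⟩ := hedge'
  have := SimpleGraph.Adj.nontrivial hab
  have := SimpleGraph.Adj.nontrivial hab'
  have hsq : n * n ≤ ℓ := le_trans (by rcases n.eq_zero_or_pos with rfl | hn <;> nlinarith) hℓ
  obtain ⟨f⟩ := nonempty_embedding_of_encLaw_eq hconn
    ((Nat.mul_le_mul hcard hcard).trans hsq) hlaw
  obtain ⟨f'⟩ := nonempty_embedding_of_encLaw_eq hconn'
    ((Nat.mul_le_mul hcard' hcard').trans hsq) hlaw.symm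
  exact SimpleGraph.nonempty_iso_of_embeddings f f'

/-- If two finite connected simple graphs with at least one edge and at most `n`
vertices induce the same law of walk encodings for walks of length `ℓ ≥ 4n³`, then
they are isomorphic. -/
theorem iso_of_encLaw_eq
    {V V' : Type*} [Fintype V] [DecidableEq V] [Fintype V'] [DecidableEq V']
    (G : SimpleGraph V) [DecidableRel G.Adj]
    (G' : SimpleGraph V') [DecidableRel G'.Adj]
    (n : ℕ) (hn : 1 ≤ n)
    (hcard : Fintype.card V ≤ n) (hcard' : Fintype.card V' ≤ n)
    (hconn : G.Connected) (hconn' : G'.Connected)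
    (hedge : G.edgeSet.Nonempty) (hedge' : G'.edgeSet.Nonempty)
    (ℓ : ℕ) (hℓ : 4 * n ^ 3 ≤ ℓ)
    (hlaw : encLaw G ℓ = encLaw G' ℓ) :
    Nonempty (G ≃g G') :=
  iso_of_encLaw_eq_general G G' n hcard hcard' hconn hconn' hedge hedge' ℓ hℓ hlaw
end
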